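/- Let T be a tree with exactly 3 pendant vertices and unique major vertex w, so T - w = T_1 ∪ T_2 ∪ T_3 with each T_i a path and the neighbor u_i of w in T_i an endpoint of T_i. Let λ be an eigenvalue of T. Then m(T, λ) = 1 if and only if either (a) m(T_i, λ) = 0 for all i = 1, 2, 3, or (b) exactly one T_i has m(T_i, λ) = 0 and the other two have m(T_j, λ) = 1. -/

import Mathlib

open scoped Classical

/-- Multiplicity of `lam` as an eigenvalue of a real symmetric matrix:
dimension of the kernel of `A - lam • 1`. -/
noncomputable def matMult {V : Type*} [Fintype V] [DecidableEq V]
    (A : Matrix V V ℝ) (lam : ℝ) : ℕ :=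
  Module.finrank ℝ (LinearMap.ker (Matrix.toLin' (A - lam • (1 : Matrix V V ℝ))))

/-- Adjacency matrix of a simple graph over ℝ. -/
noncomputable def adjM {V : Type*} [Fintype V] (G : SimpleGraph V) : Matrix V V ℝ :=
  fun i j => if G.Adj i j then 1 else 0

/-- Multiplicity of `lam` as an eigenvalue of the adjacency matrix of `G`. -/
noncomputable def gMult {V : Type*} [Fintype V] (G : SimpleGraph V) (lam : ℝ) : ℕ :=
  matMult (adjM G) lam

/-- Multiplicity of `lam` as an eigenvalue of the induced subgraph of `G` on `s`. -/
noncomputable def sMult {V : Type*} [Fintype V] (G : SimpleGraph V) (s : Set V) (lam : ℝ) : ℕ :=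
  gMult (G.induce s) lam

/-- Degree of a vertex, via the cardinality of its neighbor set. -/
noncomputable def deg {V : Type*} (G : SimpleGraph V) (v : V) : ℕ :=
  (G.neighborSet v).ncard

/-- Number of pendant (degree-1) vertices. -/
noncomputable def pendCount {V : Type*} (G : SimpleGraph V) : ℕ :=
  {v : V | deg G v = 1}.ncard

/-- Number of pendant vertices, with the paper's convention that a
single-vertex graph has `p = 2`. -/
noncomputable def pendCount' {V : Type*} (G : SimpleGraph V) : ℕ :=
  if Nat.card V ≤ 1 then 2 else pendCount G

/-- A graph is (isomorphic to) a path graph. -/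
def IsPathGraph {W : Type*} (H : SimpleGraph W) : Prop :=
  ∃ n : ℕ, Nonempty (H ≃g SimpleGraph.pathGraph n)

/-- The vertex sets (as subsets of `V`) of the connected components of `G - w`. -/
def compSupp {V : Type*} (G : SimpleGraph V) (w : V)
    (c : (G.induce {u | u ≠ w}).ConnectedComponent) : Set V :=
  Subtype.val '' c.supp

/-!
An eigenvector `x` of `T` for `lam` that vanishes at `w` restricts to eigenvectors of the legs.
Conversely an eigenvector of a leg, extended by zero, is mapped by `A - lam` to a multiple of the
indicator of `w`; this multiple is its value at the endpoint `u_i`, which is nonzero because an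
eigenvector of a path vanishing at an end vanishes identically. Pairing with such a vector and
using the symmetry of `A - lam` shows that, as soon as some leg has `lam` as an eigenvalue, every
`x` vanishes at `w`. Then `x` is determined by its values at the `u_i` of the `N` legs having
`lam` as an eigenvalue, and these values are constrained only by the row of `w`: they sum to
zero. Hence `m(T, lam) = N - 1` if `N ≥ 1`, and `m(T, lam) ≤ 1` if `N = 0`. Since the legs have
multiplicities at most one, `m(T, lam) = 1` exactly when `N = 0` or `N = 2`.
-/

open Matrix

noncomputable abbrev eigenKer {V : Type*} [Fintype V] (G : SimpleGraph V) (lam : ℝ) :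
    Submodule ℝ (V → ℝ) :=
  LinearMap.ker (Matrix.toLin' (adjM G - lam • (1 : Matrix V V ℝ)))

section EigenKer

variable {V W : Type*} [Fintype V] [Fintype W] {G : SimpleGraph V} {lam : ℝ}

lemma adjM_transpose (G : SimpleGraph V) : (adjM G)ᵀ = adjM G := by
  ext i j
  simp [adjM, G.adj_comm]

lemma adjM_sub_smul_mulVec_apply (x : V → ℝ) (v : V) :
    ((adjM G - lam • 1) *ᵥ x) v = (∑ u, if G.Adj v u then x u else 0) - lam * x v := by
  simp [adjM, mulVec, dotProduct, sub_mul, Finset.sum_sub_distrib, one_apply]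

lemma mem_eigenKer_iff {x : V → ℝ} :
    x ∈ eigenKer G lam ↔ ∀ v, (∑ u, if G.Adj v u then x u else 0) = lam * x v := by
  simp only [LinearMap.mem_ker, toLin'_apply, funext_iff, adjM_sub_smul_mulVec_apply,
    Pi.zero_apply, sub_eq_zero]

lemma comp_mem_eigenKer {H : SimpleGraph W} (e : G ≃g H) {x : W → ℝ}
    (hx : x ∈ eigenKer H lam) : x ∘ e ∈ eigenKer G lam := by
  rw [mem_eigenKer_iff] at hx ⊢
  intro v
  simp only [Function.comp_apply, ← hx (e v)]
  exact Fintype.sum_equiv e.toEquiv _ _ fun u => by simp [e.map_adj_iff]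

-- `x ⬝ᵥ (A - lam) y = (A - lam) x ⬝ᵥ y` because `A - lam` is symmetric.
lemma apply_eq_zero_of_mulVec_eq_single {x y : V → ℝ} (hx : x ∈ eigenKer G lam) {v : V}
    (hy : (adjM G - lam • 1) *ᵥ y = Pi.single v 1) : x v = 0 := by
  have hsymm : (adjM G - lam • (1 : Matrix V V ℝ))ᵀ = adjM G - lam • 1 := by
    rw [transpose_sub, transpose_smul, transpose_one, adjM_transpose]
  rw [LinearMap.mem_ker, toLin'_apply] at hx
  calc x v = x ⬝ᵥ Pi.single v 1 := by rw [dotProduct_single, mul_one]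
    _ = 0 := by rw [← hy, dotProduct_mulVec, ← mulVec_transpose, hsymm, hx, zero_dotProduct]

end EigenKer

section PathGraph

open SimpleGraph

variable {n : ℕ} {lam : ℝ}

def pathGraphReflect (n : ℕ) : pathGraph n ≃g pathGraph n where
  toEquiv := Fin.revPerm
  map_rel_iff' {u v} := by
    simp only [Fin.revPerm_apply, pathGraph_adj, Fin.val_rev]
    omega

lemma pathGraph_eq_zero_of_apply_eq_zero {x : Fin n → ℝ} (hx : x ∈ eigenKer (pathGraph n) lam)
    {i : Fin n} (hi : i.val = 0) (hxi : x i = 0) : x = 0 := by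
  rw [mem_eigenKer_iff] at hx
  have hle : ∀ m, ∀ j : Fin n, j.val ≤ m → x j = 0 := by
    intro m
    induction m with
    | zero => intro j hj; rwa [Fin.ext (hi ▸ Nat.le_zero.1 hj : j.val = i.val)]
    | succ m ih =>
      intro j hj
      rcases Nat.lt_or_ge j.val (m + 1) with hjm | hjm
      · exact ih j (by omega)
      -- the row of vertex `m` expresses `x (m + 1)` through `x m` and `x (m - 1)`
      have hrow := hx ⟨m, by omega⟩
      rw [ih ⟨m, by omega⟩ le_rfl, mul_zero, Finset.sum_eq_single j] at hrow
      · simpa [pathGraph_adj, show j.val = m + 1 by omega] using hrow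
      · intro u _ hu
        split_ifs with hadj
        · rw [pathGraph_adj] at hadj
          have := Fin.val_ne_of_ne hu
          exact ih u (by simp only at hadj; omega)
        · rfl
      · simp
  funext j
  exact hle j j le_rfl

lemma pathGraph_endpoint {k : Fin n} (hk : ((pathGraph n).neighborSet k).ncard ≤ 1) :
    k.val = 0 ∨ k.val + 1 = n := by
  by_contra! hinterior
  have hsub : {(⟨k.val - 1, by omega⟩ : Fin n), ⟨k.val + 1, by omega⟩} ⊆
      (pathGraph n).neighborSet k := by
    rintro u (rfl | rfl)
    · simp [pathGraph_adj]; omega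
    · simp [pathGraph_adj]
  have := Set.ncard_le_ncard hsub (Set.toFinite _)
  rw [Set.ncard_pair (by simp [Fin.ext_iff])] at this
  omega

lemma IsPathGraph.eq_zero_of_mem_eigenKer {W : Type*} [Fintype W] {H : SimpleGraph W}
    (hH : IsPathGraph H) {x : W → ℝ} (hx : x ∈ eigenKer H lam) {k : W}
    (hk : (H.neighborSet k).ncard ≤ 1) (hxk : x k = 0) : x = 0 := by
  obtain ⟨n, ⟨e⟩⟩ := hH
  have hy : x ∘ e.symm ∈ eigenKer (pathGraph n) lam := comp_mem_eigenKer e.symm hx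
  have hek : ((pathGraph n).neighborSet (e k)).ncard ≤ 1 := by
    rwa [← Nat.card_coe_set_eq, ← Nat.card_congr (e.mapNeighborSet k), Nat.card_coe_set_eq]
  suffices x ∘ e.symm = 0 by
    ext v
    simpa using congrFun this (e v)
  rcases pathGraph_endpoint hek with hfirst | hlast
  · exact pathGraph_eq_zero_of_apply_eq_zero hy hfirst (by simpa)
  · have hz := pathGraph_eq_zero_of_apply_eq_zero (comp_mem_eigenKer (pathGraphReflect n) hy)
      (i := (e k).rev) (by simp only [Fin.val_rev]; omega) (by simpa [pathGraphReflect])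
    ext j
    simpa [pathGraphReflect] using congrFun hz j.rev

end PathGraph

section Legs

open SimpleGraph

variable {V : Type*} {T : SimpleGraph V} {w : V}

lemma ncard_neighborSet_induce (s : Set V) (v : s) :
    ((T.induce s).neighborSet v).ncard = (T.neighborSet v ∩ s).ncard := by
  rw [← Set.ncard_image_of_injective _ Subtype.val_injective]
  congr 1
  ext u
  simp [and_comm]

/-- The legs `T_i` of the statement. -/
abbrev Leg (T : SimpleGraph V) (w : V) : Type _ := (T.induce {u | u ≠ w}).ConnectedComponent

lemma mem_compSupp_iff {c : Leg T w} {v : V} :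
    v ∈ compSupp T w c ↔
      ∃ h : v ≠ w, (T.induce {u | u ≠ w}).connectedComponentMk ⟨v, h⟩ = c := by
  simp [compSupp, ConnectedComponent.mem_supp_iff]

lemma ne_of_mem_compSupp {c : Leg T w} {v : V} (hv : v ∈ compSupp T w c) : v ≠ w :=
  (mem_compSupp_iff.1 hv).1

lemma mem_compSupp_connectedComponentMk {v : V} (hv : v ≠ w) :
    v ∈ compSupp T w ((T.induce {u | u ≠ w}).connectedComponentMk ⟨v, hv⟩) :=
  mem_compSupp_iff.2 ⟨hv, rfl⟩

lemma eq_of_mem_compSupp {c c' : Leg T w} {v : V} (hv : v ∈ compSupp T w c)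
    (hv' : v ∈ compSupp T w c') : c = c' := by
  obtain ⟨_, rfl⟩ := mem_compSupp_iff.1 hv
  obtain ⟨_, rfl⟩ := mem_compSupp_iff.1 hv'
  rfl

lemma mem_compSupp_of_adj {c : Leg T w} {v u : V} (hvc : v ∈ compSupp T w c) (hadj : T.Adj v u)
    (hu : u ≠ w) : u ∈ compSupp T w c := by
  obtain ⟨hv, rfl⟩ := mem_compSupp_iff.1 hvc
  exact mem_compSupp_iff.2 ⟨hu, (ConnectedComponent.connectedComponentMk_eq_of_adj
    (G := T.induce {u | u ≠ w}) (v := ⟨v, hv⟩) (w := ⟨u, hu⟩) hadj).symm⟩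

lemma SimpleGraph.IsTree.existsUnique_adj_mem_compSupp (hT : T.IsTree) (c : Leg T w) :
    ∃! u, u ∈ compSupp T w c ∧ T.Adj w u := by
  refine existsUnique_of_exists_of_unique ?_ ?_
  · obtain ⟨⟨v, hv⟩, rfl⟩ := c.exists_rep
    obtain ⟨p, hp⟩ := (hT.connected.preconnected w v).some.toPath
    obtain ⟨u, hwu, q, rfl⟩ := p.exists_eq_cons_of_ne (Ne.symm hv)
    rw [Walk.cons_isPath_iff] at hp
    have hq : ∀ x ∈ q.support, x ∈ {u | u ≠ w} := fun x hx hxw => hp.2 (hxw ▸ hx)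
    exact ⟨u, mem_compSupp_iff.2 ⟨hq u q.start_mem_support,
      ConnectedComponent.sound ⟨q.induce _ hq⟩⟩, hwu⟩
  · rintro u u' ⟨hu, hwu⟩ ⟨hu', hwu'⟩
    obtain ⟨huw, rfl⟩ := mem_compSupp_iff.1 hu
    obtain ⟨hu'w, hc⟩ := mem_compSupp_iff.1 hu'
    obtain ⟨q⟩ := ConnectedComponent.exact hc
    classical
    let q' := (q.map (Embedding.induce {u | u ≠ w}).toHom).toPath
    have hwq : w ∉ q'.1.support := fun hw => by
      obtain ⟨⟨x, hx⟩, -, hxw⟩ :=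
        List.mem_map.1 (Walk.support_map _ q ▸ Walk.support_toPath_subset_support _ hw)
      exact hx hxw
    -- otherwise `w - u' ⋯ u - w` would be a cycle
    have := hT.isAcyclic.mem_support_of_ne_mem_support_of_adj_of_isPath
      (Walk.IsPath.of_adj hwu'.symm) q'.2 hwu hwq
    simp only [Adj.toWalk, Walk.support_cons, Walk.support_nil, List.mem_cons,
      List.not_mem_nil, or_false] at this
    exact this.elim id fun h => absurd h huw

/-- The vertex `u_i` of the statement: the neighbour of `w` in the leg `c` (`w` itself when there
is none, which cannot happen in a tree). -/
noncomputable def attachment (T : SimpleGraph V) (w : V) (c : Leg T w) : V :=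
  if h : ∃ u, u ∈ compSupp T w c ∧ T.Adj w u then h.choose else w

variable (hT : T.IsTree)
include hT

lemma attachment_spec (c : Leg T w) :
    attachment T w c ∈ compSupp T w c ∧ T.Adj w (attachment T w c) := by
  have h := (hT.existsUnique_adj_mem_compSupp c).exists
  simpa only [attachment, dif_pos h] using h.choose_spec

lemma eq_attachment {c : Leg T w} {u : V} (hu : u ∈ compSupp T w c) (hwu : T.Adj w u) :
    u = attachment T w c :=
  (hT.existsUnique_adj_mem_compSupp c).unique ⟨hu, hwu⟩ (attachment_spec hT c)

noncomputable def legEquivNeighborSet : Leg T w ≃ T.neighborSet w where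
  toFun c := ⟨attachment T w c, (attachment_spec hT c).2⟩
  invFun u := (T.induce {u | u ≠ w}).connectedComponentMk ⟨u, (T.ne_of_adj u.2).symm⟩
  left_inv c := eq_of_mem_compSupp (mem_compSupp_connectedComponentMk _) (attachment_spec hT c).1
  right_inv u := Subtype.ext
    (eq_attachment hT (mem_compSupp_connectedComponentMk (T.ne_of_adj u.2).symm) u.2).symm

lemma card_leg : Nat.card (Leg T w) = deg T w :=
  Nat.card_congr (legEquivNeighborSet hT)

lemma sum_adj_eq_sum_attachment [Fintype V] (x : V → ℝ) :
    ∑ u, (if T.Adj w u then x u else 0) = ∑ c : Leg T w, x (attachment T w c) := by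
  classical
  rw [← Finset.sum_filter, Finset.sum_subtype _ (p := (· ∈ T.neighborSet w)) (by simp) x]
  exact (Fintype.sum_equiv (legEquivNeighborSet hT) _ _ fun c => rfl).symm

end Legs

section Induce

variable {V : Type*} [Fintype V] {G : SimpleGraph V} {lam : ℝ} {s : Set V}

lemma sum_subtype_adj_eq_sum_adj {x : V → ℝ} {v : V} (hx : ∀ u ∉ s, G.Adj v u → x u = 0) :
    ∑ u : s, (if G.Adj v u then x u else 0) = ∑ u, (if G.Adj v u then x u else 0) := by
  classical
  rw [Finset.sum_set_coe (f := fun u => if G.Adj v u then x u else 0)]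
  refine Finset.sum_subset (Finset.subset_univ _) fun u _ hu => ?_
  simp only [Set.mem_toFinset] at hu
  split_ifs with hadj
  exacts [hx u hu hadj, rfl]

lemma restrict_mem_eigenKer_induce {x : V → ℝ} (hx : x ∈ eigenKer G lam)
    (hs : ∀ v ∈ s, ∀ u ∉ s, G.Adj v u → x u = 0) :
    (fun u : s => x u) ∈ eigenKer (G.induce s) lam := by
  rw [mem_eigenKer_iff] at hx ⊢
  intro v
  simpa only [SimpleGraph.comap_adj, Function.Embedding.subtype_apply,
    sum_subtype_adj_eq_sum_adj (hs v v.2)] using hx v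

noncomputable def extendByZero (s : Set V) (φ : s → ℝ) : V → ℝ :=
  fun v => if h : v ∈ s then φ ⟨v, h⟩ else 0

lemma mulVec_extendByZero_apply {φ : s → ℝ} (hφ : φ ∈ eigenKer (G.induce s) lam) (v : V) :
    ((adjM G - lam • 1) *ᵥ extendByZero s φ) v =
      if v ∈ s then 0 else ∑ u : s, (if G.Adj v u then φ u else 0) := by
  have hsum : ∑ u : s, (if G.Adj v u then φ u else 0) =
      ∑ u, (if G.Adj v u then extendByZero s φ u else 0) := by
    rw [← sum_subtype_adj_eq_sum_adj (x := extendByZero s φ) fun u hu _ => dif_neg hu]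
    simp [extendByZero]
  rw [adjM_sub_smul_mulVec_apply, ← hsum]
  split_ifs with hv
  · rw [mem_eigenKer_iff] at hφ
    simpa [extendByZero, hv, sub_eq_zero] using hφ ⟨v, hv⟩
  · simp [extendByZero, hv]

end Induce

section LegKernels

open SimpleGraph

variable {V : Type*} [Fintype V] {T : SimpleGraph V} {w : V} {lam : ℝ} {x : V → ℝ}

lemma restrict_mem_eigenKer_leg (hx : x ∈ eigenKer T lam) (hxw : x w = 0) (c : Leg T w) :
    (fun u : compSupp T w c => x u) ∈ eigenKer (T.induce (compSupp T w c)) lam :=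
  restrict_mem_eigenKer_induce hx fun _ hv u hu hadj => by
    by_cases huw : u = w
    · rwa [huw]
    · exact absurd (mem_compSupp_of_adj hv hadj huw) hu

lemma apply_attachment_eq_zero_of_sMult_eq_zero (hT : T.IsTree) (hx : x ∈ eigenKer T lam)
    (hxw : x w = 0) {c : Leg T w} (hc : sMult T (compSupp T w c) lam = 0) :
    x (attachment T w c) = 0 := by
  have hbot : eigenKer (T.induce (compSupp T w c)) lam = ⊥ := Submodule.finrank_eq_zero.1 hc
  have h := restrict_mem_eigenKer_leg hx hxw c
  rw [hbot, Submodule.mem_bot] at h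
  exact congrFun h ⟨_, (attachment_spec hT c).1⟩

lemma mulVec_extendByZero_leg (hT : T.IsTree) {c : Leg T w} {φ : compSupp T w c → ℝ}
    (hφ : φ ∈ eigenKer (T.induce (compSupp T w c)) lam) :
    (adjM T - lam • 1) *ᵥ extendByZero (compSupp T w c) φ =
      Pi.single w (φ ⟨attachment T w c, (attachment_spec hT c).1⟩) := by
  ext v
  rw [mulVec_extendByZero_apply hφ]
  by_cases hvw : v = w
  · subst hvw
    rw [if_neg fun hv => ne_of_mem_compSupp hv rfl, Pi.single_eq_same,
      Finset.sum_eq_single ⟨attachment T v c, (attachment_spec hT c).1⟩,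
      if_pos (attachment_spec hT c).2]
    · intro u _ hu
      exact if_neg fun hadj => hu (Subtype.ext (eq_attachment hT u.2 hadj))
    · simp
  · rw [Pi.single_eq_of_ne hvw]
    split_ifs with hv
    · rfl
    · exact Finset.sum_eq_zero fun u _ =>
        if_neg fun hadj => hv (mem_compSupp_of_adj u.2 hadj.symm hvw)

end LegKernels

section LinearAlgebra

variable {K ι : Type*} [Field K]

lemma finrank_ker_linearCombination_one [Fintype ι] [Nonempty ι] :
    Module.finrank K (LinearMap.ker (Fintype.linearCombination K (1 : ι → K))) =
      Fintype.card ι - 1 := by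
  classical
  have hsurj : Function.Surjective (Fintype.linearCombination K (1 : ι → K)) := fun r =>
    ⟨Pi.single (Classical.arbitrary ι) r, by simp [Fintype.linearCombination_apply]⟩
  have := LinearMap.finrank_range_add_finrank_ker (Fintype.linearCombination K (1 : ι → K))
  rw [LinearMap.range_eq_top.2 hsurj, finrank_top, Module.finrank_self,
    Module.finrank_fintype_fun_eq_card] at this
  omega

lemma finrank_le_one_of_apply_eq_zero {S : Submodule K (ι → K)} (i : ι)
    (h : ∀ x ∈ S, x i = 0 → x = 0) : Module.finrank K S ≤ 1 := by
  have hinj : Function.Injective ((LinearMap.proj i).comp S.subtype) := by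
    rw [← LinearMap.ker_eq_bot, LinearMap.ker_eq_bot']
    exact fun x hx => Subtype.ext (h x x.2 hx)
  simpa using LinearMap.finrank_le_finrank_of_injective hinj

end LinearAlgebra

section Multiplicity

open SimpleGraph

variable {V : Type*} [Fintype V] {T : SimpleGraph V} {w : V} {lam : ℝ}

def LegsRigid (T : SimpleGraph V) (w : V) (lam : ℝ) : Prop :=
  ∀ c : Leg T w, ∀ v (hv : v ∈ compSupp T w c), T.Adj w v →
    ∀ φ ∈ eigenKer (T.induce (compSupp T w c)) lam, φ ⟨v, hv⟩ = 0 → φ = 0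

lemma legsRigid_of_isPathGraph
    (hpaths : ∀ c : Leg T w, IsPathGraph (T.induce (compSupp T w c)) ∧
      ∀ v ∈ compSupp T w c, T.Adj w v → (T.neighborSet v ∩ compSupp T w c).ncard ≤ 1) :
    LegsRigid T w lam := fun c v hv hwv _ hφ hφv =>
  (hpaths c).1.eq_zero_of_mem_eigenKer hφ
    (by rw [ncard_neighborSet_induce]; exact (hpaths c).2 v hv hwv) hφv

abbrev EigenLeg (T : SimpleGraph V) (w : V) (lam : ℝ) : Type _ :=
  {c : Leg T w // sMult T (compSupp T w c) lam ≠ 0}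

variable (hT : T.IsTree) (hrigid : LegsRigid T w lam)
include hT hrigid

lemma sMult_le_one (c : Leg T w) : sMult T (compSupp T w c) lam ≤ 1 :=
  finrank_le_one_of_apply_eq_zero ⟨attachment T w c, (attachment_spec hT c).1⟩ fun φ hφ =>
    hrigid c _ (attachment_spec hT c).1 (attachment_spec hT c).2 φ hφ

lemma eq_zero_of_apply_attachment_eq_zero {x : V → ℝ} (hx : x ∈ eigenKer T lam)
    (hxw : x w = 0)     (hatt : ∀ c, x (attachment T w c) = 0) : x = 0 := by
  ext v
  by_cases hvw : v = w
  · rwa [hvw]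
  · let c := (T.induce {u | u ≠ w}).connectedComponentMk ⟨v, hvw⟩
    have := hrigid c _ (attachment_spec hT c).1 (attachment_spec hT c).2 _
      (restrict_mem_eigenKer_leg hx hxw c) (hatt c)
    exact congrFun this ⟨v, mem_compSupp_connectedComponentMk hvw⟩

/-- An eigenvector of a leg, normalised at `u_i` and extended by zero, is mapped by
`A - lam` to the indicator of `w`. -/
lemma exists_mulVec_eq_single {c : Leg T w} (hc : sMult T (compSupp T w c) lam ≠ 0) :
    ∃ y : V → ℝ, (adjM T - lam • 1) *ᵥ y = Pi.single w 1 ∧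
      (fun c' => y (attachment T w c')) = Pi.single c 1 := by
  obtain ⟨φ, hφ, hφ0⟩ := (Submodule.ne_bot_iff (eigenKer (T.induce (compSupp T w c)) lam)).1
    fun h => hc (Submodule.finrank_eq_zero.2 h)
  set a := φ ⟨attachment T w c, (attachment_spec hT c).1⟩
  have ha : a ≠ 0 := fun h => hφ0 (hrigid c _ _ (attachment_spec hT c).2 φ hφ h)
  refine ⟨extendByZero (compSupp T w c) (a⁻¹ • φ), ?_, ?_⟩
  · rw [mulVec_extendByZero_leg hT (Submodule.smul_mem _ _ hφ)]
    simp [a, ha]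
  · ext c'
    by_cases hc' : c' = c
    · subst hc'
      simp [extendByZero, (attachment_spec hT c').1, a, ha]
    · have : attachment T w c' ∉ compSupp T w c := fun h =>
        hc' (eq_of_mem_compSupp (attachment_spec hT c').1 h)
      simp [extendByZero, this, Pi.single_eq_of_ne hc']

lemma gMult_le_one_of_forall_sMult_eq_zero (h : ∀ c, sMult T (compSupp T w c) lam = 0) :
    gMult T lam ≤ 1 :=
  finrank_le_one_of_apply_eq_zero w fun _ hx hxw =>
    eq_zero_of_apply_attachment_eq_zero hT hrigid hx hxw fun _ =>
      apply_attachment_eq_zero_of_sMult_eq_zero hT hx hxw (h _)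

lemma gMult_le_card_sub_one [Nonempty (EigenLeg T w lam)] :
    gMult T lam ≤ Fintype.card (EigenLeg T w lam) - 1 := by
  obtain ⟨y, hy, -⟩ :=
    exists_mulVec_eq_single hT hrigid (Classical.arbitrary (EigenLeg T w lam)).2
  have hxw : ∀ x ∈ eigenKer T lam, x w = 0 := fun x hx =>
    apply_eq_zero_of_mulVec_eq_single hx hy
  have hzero : ∀ x ∈ eigenKer T lam, ∀ c,
      sMult T (compSupp T w c) lam = 0 → x (attachment T w c) = 0 :=
    fun x hx _ hc => apply_attachment_eq_zero_of_sMult_eq_zero hT hx (hxw x hx) hc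
  let evalAttachment : (V → ℝ) →ₗ[ℝ] EigenLeg T w lam → ℝ :=
    LinearMap.pi fun i => LinearMap.proj (attachment T w i)
  -- the row of `w` says that the values at the attachments sum to `lam * x w = 0`
  have hmem : ∀ x : eigenKer T lam,
      evalAttachment x ∈
        LinearMap.ker (Fintype.linearCombination ℝ (1 : EigenLeg T w lam → ℝ)) := by
    rintro ⟨x, hx⟩
    have hsum : ∑ i : EigenLeg T w lam, x (attachment T w i) = ∑ c, x (attachment T w c) := by
      rw [← Fintype.sum_subtype_add_sum_subtype (fun c => sMult T (compSupp T w c) lam ≠ 0),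
        left_eq_add]
      exact Finset.sum_eq_zero fun c _ => hzero x hx c (not_not.1 c.2)
    have hrow := mem_eigenKer_iff.1 hx w
    rw [sum_adj_eq_sum_attachment hT, hxw x hx, mul_zero, ← hsum] at hrow
    simpa [evalAttachment, Fintype.linearCombination_apply] using hrow
  have hinj :
      Function.Injective ((evalAttachment.comp (eigenKer T lam).subtype).codRestrict _ hmem) := by
    rw [← LinearMap.ker_eq_bot, LinearMap.ker_eq_bot']
    rintro ⟨x, hx⟩ h
    refine Subtype.ext (eq_zero_of_apply_attachment_eq_zero hT hrigid hx (hxw x hx) fun c => ?_)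
    by_cases hc : sMult T (compSupp T w c) lam = 0
    · exact hzero x hx c hc
    · exact congrFun (congrArg Subtype.val h) ⟨c, hc⟩
  exact (LinearMap.finrank_le_finrank_of_injective hinj).trans_eq
    finrank_ker_linearCombination_one

lemma card_sub_one_le_gMult : Fintype.card (EigenLeg T w lam) - 1 ≤ gMult T lam := by
  rcases isEmpty_or_nonempty (EigenLeg T w lam) with hempty | _
  · simp
  choose y hy hyatt using fun i : EigenLeg T w lam => exists_mulVec_eq_single hT hrigid i.2
  let Φ := Fintype.linearCombination ℝ y
  have hatt : ∀ t (j : EigenLeg T w lam), Φ t (attachment T w j) = t j := by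
    intro t j
    simp only [Φ, Fintype.linearCombination_apply, Finset.sum_apply, Pi.smul_apply, smul_eq_mul,
      fun i => congrFun (hyatt i) j]
    rw [Finset.sum_eq_single j, Pi.single_eq_same, mul_one]
    · exact fun i _ hij => by rw [Pi.single_eq_of_ne (Subtype.coe_injective.ne hij.symm), mul_zero]
    · simp
  have hmem : ∀ t : LinearMap.ker (Fintype.linearCombination ℝ (1 : EigenLeg T w lam → ℝ)),
      Φ t ∈ eigenKer T lam := by
    rintro ⟨t, ht⟩
    rw [LinearMap.mem_ker, Fintype.linearCombination_apply] at ht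
    rw [LinearMap.mem_ker, toLin'_apply]
    simp only [Pi.one_apply, smul_eq_mul, mul_one] at ht
    simp [Φ, Fintype.linearCombination_apply, Matrix.mulVec_sum, Matrix.mulVec_smul, hy,
      ← Finset.sum_smul, ht]
  have hinj : Function.Injective ((Φ.domRestrict _).codRestrict _ hmem) := by
    rw [← LinearMap.ker_eq_bot, LinearMap.ker_eq_bot']
    rintro ⟨t, ht⟩ h
    ext j
    have := congrFun (congrArg Subtype.val h) (attachment T w j)
    change Φ t (attachment T w j) = 0 at this
    rwa [hatt] at this
  exact finrank_ker_linearCombination_one.symm.trans_le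
    (LinearMap.finrank_le_finrank_of_injective hinj)

theorem gMult_eq_card_sub_one [Nonempty (EigenLeg T w lam)] :
    gMult T lam = Fintype.card (EigenLeg T w lam) - 1 :=
  (gMult_le_card_sub_one hT hrigid).antisymm (card_sub_one_le_gMult hT hrigid)

end Multiplicity

lemma forall_eq_zero_or_exists_unique_eq_zero_iff {C : Type*} [Fintype C] {f : C → ℕ}
    (hf : ∀ c, f c ≤ 1) (hC : Fintype.card C = 3) :
    ((∀ c, f c = 0) ∨ ∃ c₀, f c₀ = 0 ∧ ∀ c ≠ c₀, f c = 1) ↔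
      Fintype.card {c // f c ≠ 0} = 0 ∨ Fintype.card {c // f c ≠ 0} = 2 := by
  classical
  have hsplit : Fintype.card {c // f c ≠ 0} + Fintype.card {c // f c = 0} = 3 := by
    rw [Fintype.card_subtype_compl, ← hC]
    have := Fintype.card_subtype_le fun c => f c = 0
    omega
  have hunique :
      (∃ c₀, f c₀ = 0 ∧ ∀ c ≠ c₀, f c = 1) ↔ Fintype.card {c // f c = 0} = 1 := by
    rw [Fintype.card_eq_one_iff]
    constructor
    · rintro ⟨c₀, h₀, h₁⟩
      exact ⟨⟨c₀, h₀⟩, fun ⟨c, hc⟩ => Subtype.ext <| by_contra fun hne => by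
        have := h₁ c hne
        omega⟩
    · rintro ⟨⟨c₀, h₀⟩, huniq⟩
      refine ⟨c₀, h₀, fun c hc => ?_⟩
      by_contra hne
      exact hc (congrArg Subtype.val (huniq ⟨c, by have := hf c; omega⟩))
  have hall : (∀ c, f c = 0) ↔ Fintype.card {c // f c ≠ 0} = 0 := by
    rw [Fintype.card_eq_zero_iff, isEmpty_subtype]
    simp only [ne_eq, not_not]
  rw [hall, hunique]
  omega

theorem stmt19_general {V : Type*} [Fintype V] (T : SimpleGraph V) (hT : T.IsTree)
    (w : V) (hw : deg T w = 3)
    (hpaths : ∀ c : (T.induce {u | u ≠ w}).ConnectedComponent,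
      IsPathGraph (T.induce (compSupp T w c)) ∧
      ∀ v ∈ compSupp T w c, T.Adj w v →
        (T.neighborSet v ∩ compSupp T w c).ncard ≤ 1)
    (lam : ℝ) (heig : 1 ≤ gMult T lam) :
    gMult T lam = 1 ↔
      ((∀ c : (T.induce {u | u ≠ w}).ConnectedComponent,
          sMult T (compSupp T w c) lam = 0) ∨
       (∃ c₀ : (T.induce {u | u ≠ w}).ConnectedComponent,
          sMult T (compSupp T w c₀) lam = 0 ∧
          ∀ c ≠ c₀, sMult T (compSupp T w c) lam = 1)) := by
  have hrigid : LegsRigid T w lam := legsRigid_of_isPathGraph hpaths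
  have hlegs : Fintype.card (Leg T w) = 3 := by
    rw [← Nat.card_eq_fintype_card, card_leg hT, hw]
  rw [forall_eq_zero_or_exists_unique_eq_zero_iff (sMult_le_one hT hrigid) hlegs]
  rcases isEmpty_or_nonempty (EigenLeg T w lam) with hnone | hsome
  · have hle := gMult_le_one_of_forall_sMult_eq_zero hT hrigid fun c =>
      by_contra fun hc => hnone.false ⟨c, hc⟩
    simp [Fintype.card_eq_zero, le_antisymm hle heig]
  · rw [gMult_eq_card_sub_one hT hrigid]
    have := Fintype.card_pos (α := EigenLeg T w lam)
    dsimp only [EigenLeg] at this ⊢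
    omega

/-- Theorem 1.40 in terms of the three legs of the spider. -/
theorem stmt19 {V : Type*} [Fintype V] (T : SimpleGraph V) (hT : T.IsTree)
    (hp : pendCount T = 3) (w : V) (hw : deg T w = 3)
    (huniq : ∀ u : V, 3 ≤ deg T u → u = w)
    (hpaths : ∀ c : (T.induce {u | u ≠ w}).ConnectedComponent,
      IsPathGraph (T.induce (compSupp T w c)) ∧
      ∀ v ∈ compSupp T w c, T.Adj w v →
        (T.neighborSet v ∩ compSupp T w c).ncard ≤ 1)
    (lam : ℝ) (heig : 1 ≤ gMult T lam) :
    gMult T lam = 1 ↔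
      ((∀ c : (T.induce {u | u ≠ w}).ConnectedComponent,
          sMult T (compSupp T w c) lam = 0) ∨
       (∃ c₀ : (T.induce {u | u ≠ w}).ConnectedComponent,
          sMult T (compSupp T w c₀) lam = 0 ∧
          ∀ c ≠ c₀, sMult T (compSupp T w c) lam = 1)) :=
  stmt19_general T hT w hw hpaths lam heig
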